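/- Let G be a DAG with topological order v_1,...,v_n, G_i = G[{v_1,...,v_i}], and S_i the union of all frontier antichains of G_i (the support). If v_i ∈ S_j for some j ≥ i, then v_i ∈ S_t for all t with i ≤ t ≤ j. -/

import Mathlib

/-!
Passing from `G_{t+1}` to `G_t` deletes the sink `v_t`. If `A` is a frontier antichain of
`G_{t+1}`, then `A` without `v_t` is a frontier antichain of `G_t`: an antichain `B` of `G_t`
dominating it extends, by the vertices of `A` of index `t`, to an antichain of `G_{t+1}`
dominating `A` — `B` cannot reach `v_t`, since `B` is reached from `A` and `A` is an antichain.
Hence `S_{t+1} ⊆ S_t ∪ {v_t}`, and the claim follows by descending induction from `j`.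
-/

open Relation

/-- A directed graph (edge relation `E`) is acyclic. -/
def Acyclic {V : Type*} (E : V → V → Prop) : Prop := ∀ v, ¬ TransGen E v v

/-- `A` is an antichain: its vertices are pairwise non-reachable
(reachability = reflexive-transitive closure of `E`). -/
def IsAC {V : Type*} (E : V → V → Prop) (A : Finset V) : Prop :=
  ∀ a ∈ A, ∀ b ∈ A, a ≠ b → ¬ ReflTransGen E a b

/-- `B` dominates `A`: same size, and every vertex of `B` is reachable from some vertex of `A`. -/
def Dom {V : Type*} (E : V → V → Prop) (B A : Finset V) : Prop :=
  B.card = A.card ∧ ∀ b ∈ B, ∃ a ∈ A, ReflTransGen E a b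

/-- A frontier antichain: an antichain not dominated by any other antichain. -/
def Frontier {V : Type*} (E : V → V → Prop) (A : Finset V) : Prop :=
  IsAC E A ∧ ∀ B : Finset V, IsAC E B → B ≠ A → ¬ Dom E B A

/-- The identity order on `Fin n` is a topological order for `E`. -/
def Topo {n : ℕ} (E : Fin n → Fin n → Prop) : Prop := ∀ u v, E u v → (u : ℕ) < (v : ℕ)

/-- The edge relation of the induced subgraph `G_i` on the first `i` vertices. -/
def Erest {n : ℕ} (E : Fin n → Fin n → Prop) (i : ℕ) (u v : Fin n) : Prop :=
  E u v ∧ (u : ℕ) < i ∧ (v : ℕ) < i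

/-- `A` is a frontier antichain of the induced subgraph `G_i` on the first `i` vertices. -/
def FrontierIn {n : ℕ} (E : Fin n → Fin n → Prop) (i : ℕ) (A : Finset (Fin n)) : Prop :=
  (∀ a ∈ A, (a : ℕ) < i) ∧ IsAC (Erest E i) A ∧
  ∀ B : Finset (Fin n), (∀ b ∈ B, (b : ℕ) < i) → IsAC (Erest E i) B → B ≠ A →
    ¬ Dom (Erest E i) B A

/-- The support `S_i`: union of all frontier antichains of `G_i`. -/
def SupportIn {n : ℕ} (E : Fin n → Fin n → Prop) (i : ℕ) : Set (Fin n) :=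
  {v | ∃ A : Finset (Fin n), FrontierIn E i A ∧ v ∈ A}

open Finset

lemma IsAC.mono {V : Type*} {E E' : V → V → Prop} {A B : Finset V} (hA : IsAC E A)
    (hBA : B ⊆ A) (hE : ∀ a b, E' a b → E a b) : IsAC E' B :=
  fun a ha b hb hab hr => hA a (hBA ha) b (hBA hb) hab (ReflTransGen.mono hE _ _ hr)

section InducedSubgraphs

variable {n : ℕ} {E : Fin n → Fin n → Prop}

lemma Erest.mono {s t : ℕ} (hst : s ≤ t) {u v : Fin n} (h : Erest E s u v) : Erest E t u v :=
  ⟨h.1, h.2.1.trans_le hst, h.2.2.trans_le hst⟩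

lemma Topo.erest (hE : Topo E) (i : ℕ) : Topo (Erest E i) :=
  fun u v h => hE u v h.1

lemma Topo.val_le_of_reflTransGen (hE : Topo E) {a b : Fin n} (h : ReflTransGen E a b) :
    (a : ℕ) ≤ b := by
  induction h with
  | refl => exact le_rfl
  | tail _ hbc ih => exact ih.trans (hE _ _ hbc).le

lemma Topo.reflTransGen_erest_of_succ (hE : Topo E) {t : ℕ} {a b : Fin n}
    (h : ReflTransGen (Erest E (t + 1)) a b) (hb : (b : ℕ) < t) :
    ReflTransGen (Erest E t) a b := by
  induction h with
  | refl => exact .refl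
  | @tail c d _ hcd ih =>
    have hc : (c : ℕ) < t := (hE _ _ hcd.1).trans hb
    exact (ih hc).tail ⟨hcd.1, hc, hb⟩

lemma Topo.isAC_erest_succ_union (hE : Topo E) {t : ℕ} {B T : Finset (Fin n)}
    (hB_lt : ∀ b ∈ B, (b : ℕ) < t) (hB_ac : IsAC (Erest E t) B) (hT : ∀ w ∈ T, (w : ℕ) = t)
    (hB_not_reach : ∀ b ∈ B, ∀ w ∈ T, ¬ ReflTransGen (Erest E (t + 1)) b w) :
    IsAC (Erest E (t + 1)) (B ∪ T) := by
  intro a ha b hb hab hr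
  rcases mem_union.1 ha with ha | ha <;> rcases mem_union.1 hb with hb | hb
  · exact hB_ac a ha b hb hab (hE.reflTransGen_erest_of_succ hr (hB_lt b hb))
  · exact hB_not_reach a ha b hb hr
  · have := (hE.erest _).val_le_of_reflTransGen hr
    have := hT a ha
    have := hB_lt b hb
    omega
  · exact hab (Fin.ext ((hT a ha).trans (hT b hb).symm))

lemma Topo.frontierIn_filter_lt_of_succ (hE : Topo E) {t : ℕ} {A : Finset (Fin n)}
    (hA : FrontierIn E (t + 1) A) : FrontierIn E t (A.filter fun a => (a : ℕ) < t) := by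
  obtain ⟨hA_lt, hA_ac, hA_max⟩ := hA
  have hmono : ∀ a b, Erest E t a b → Erest E (t + 1) a b := fun _ _ => Erest.mono t.le_succ
  refine ⟨fun a ha => (mem_filter.1 ha).2, hA_ac.mono (filter_subset _ _) hmono, ?_⟩
  rintro B hB_lt hB_ac hB_ne ⟨hB_card, hB_dom⟩
  set T : Finset (Fin n) := A.filter fun a => ¬ (a : ℕ) < t
  have hT : ∀ a ∈ T, (a : ℕ) = t := fun a ha => by
    have := hA_lt a (mem_filter.1 ha).1
    have := (mem_filter.1 ha).2
    omega
  have hB_not_reach : ∀ b ∈ B, ∀ w ∈ T, ¬ ReflTransGen (Erest E (t + 1)) b w := by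
    intro b hb w hw hbw
    obtain ⟨a, ha, hab⟩ := hB_dom b hb
    obtain ⟨haA, ha_lt⟩ := mem_filter.1 ha
    obtain ⟨hwA, hw_ge⟩ := mem_filter.1 hw
    exact hA_ac a haA w hwA (by rintro rfl; exact hw_ge ha_lt)
      ((ReflTransGen.mono hmono _ _ hab).trans hbw)
  refine hA_max (B ∪ T) ?_ ?_ ?_ ⟨?_, ?_⟩
  · intro b hb
    rcases mem_union.1 hb with hb | hb
    · exact (hB_lt b hb).trans t.lt_succ_self
    · exact hA_lt b (mem_filter.1 hb).1
  · exact hE.isAC_erest_succ_union hB_lt hB_ac hT hB_not_reach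
  · intro h
    apply hB_ne
    have := congrArg (filter fun a : Fin n => (a : ℕ) < t) h
    rwa [filter_union, filter_true_of_mem hB_lt,
      filter_false_of_mem fun a ha => (mem_filter.1 ha).2, union_empty] at this
  · have hBT : Disjoint B T :=
      disjoint_left.2 fun b hb hbT => (mem_filter.1 hbT).2 (hB_lt b hb)
    rw [card_union_of_disjoint hBT, hB_card, card_filter_add_card_filter_not]
  · intro b hb
    rcases mem_union.1 hb with hb | hb
    · obtain ⟨a, ha, hab⟩ := hB_dom b hb
      exact ⟨a, (mem_filter.1 ha).1, ReflTransGen.mono hmono _ _ hab⟩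
    · exact ⟨b, (mem_filter.1 hb).1, .refl⟩

lemma Topo.mem_supportIn_of_succ (hE : Topo E) {v : Fin n} {t : ℕ} (hv : (v : ℕ) < t)
    (h : v ∈ SupportIn E (t + 1)) : v ∈ SupportIn E t := by
  obtain ⟨A, hA, hvA⟩ := h
  exact ⟨_, hE.frontierIn_filter_lt_of_succ hA, mem_filter.2 ⟨hvA, hv⟩⟩

end InducedSubgraphs

theorem support_interval_general {n : ℕ} (E : Fin n → Fin n → Prop) (hE : Topo E)
    (v : Fin n) (j : ℕ) (h : v ∈ SupportIn E j)
    (t : ℕ) (ht1 : (v : ℕ) < t) (ht2 : t ≤ j) :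
    v ∈ SupportIn E t := by
  induction j, ht2 using Nat.le_induction with
  | base => exact h
  | succ j htj ih => exact ih (hE.mem_supportIn_of_succ (ht1.trans_le htj) h)

/-- if `v_i ∈ S_j` for some `j ≥ i` then `v_i ∈ S_t` for all `i ≤ t ≤ j`
(here `v` has index `v.val`, so it first appears in `G_{v.val + 1}`). -/
theorem support_interval {n : ℕ} (E : Fin n → Fin n → Prop) (hE : Topo E)
    (v : Fin n) (j : ℕ) (hj : j ≤ n) (h : v ∈ SupportIn E j)
    (t : ℕ) (ht1 : (v : ℕ) < t) (ht2 : t ≤ j) :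
    v ∈ SupportIn E t :=
  support_interval_general E hE v j h t ht1 ht2
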